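/- arXiv:1804.06513 — 2 statements merged into one kernel-verified Lean document; each statement's English description precedes it below -/
import Mathlib

section
/- Let J be a 2-torsion free and (n−1)-torsion free Jordan ring with nontrivial idempotent e satisfying condition (i), and D : J → J an n-multiplicative derivation with D(e) = 0. Then D(2e) = 0, and D(2^{n−1} a) = 2^{n−1} D(a) for all a ∈ J_{1/2} and all a ∈ J₁. -/
/-- Peirce 1-component relative to `e`: elements `x` with `e*x = x`. -/
def peirce1 {J : Type*} [Mul J] (e : J) : Set J := {x | e * x = x}

/-- Peirce 1/2-component relative to `e`: elements `x` with `e*x = (1/2)x`, i.e. `e*x + e*x = x`. -/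
def peirceHalf {J : Type*} [Mul J] [Add J] (e : J) : Set J := {x | e * x + e * x = x}

/-- Peirce 0-component relative to `e`: elements `x` with `e*x = 0`. -/
def peirce0 {J : Type*} [Mul J] [Zero J] (e : J) : Set J := {x | e * x = 0}

/-- The right-normed nonassociative monomial `x₁(x₂(⋯(x_{n-1}x_n)⋯))` on a list of arguments. -/
def rnm {J : Type*} [Mul J] [Zero J] : List J → J
  | [] => 0
  | [x] => x
  | x :: y :: l => x * rnm (y :: l)

/-- `d` is an `n`-multiplicative derivation (w.r.t. the right-normed monomial of degree `n`):
`d(m(x₁,…,xₙ)) = Σᵢ m(x₁,…,d(xᵢ),…,xₙ)`. -/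
def IsNDer {J : Type*} [NonUnitalNonAssocRing J] (n : ℕ) (d : J → J) : Prop :=
  ∀ l : List J, l.length = n →
    d (rnm l) = ∑ i ∈ Finset.range n, rnm (l.set i (d (l.getD i 0)))

/-!
Write `N = n - 1` and `L_y z = y * z`. Feeding the monomial `y(y(⋯(y v)))` with `N` factors `y`
into `D` shows that `D` commutes with `L_y^N` whenever `D y = 0`. As `L_{2e} = 2 L_e`, once
`D (2e) = 0` this gives both scaling identities: on `J_{1/2}` because `L_e^N (2^N a) = a` while
`L_{2e}` fixes `2^N a`, on `J_1` because `L_e` fixes `a`.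

For `D (2e) = 0`, the monomials `(2e) e ⋯ e` and `t (2e) e ⋯ e` with `t ∈ J_{1/2}` give
`x := D (2e) ∈ J_1` and `t x = D t - 2 e (D t)`. The Peirce rules put `t x` in `J_{1/2}`, whereas
`1 - 2 L_e` maps into `J_0 + J_1` (as `2 L_e³ - 3 L_e² + L_e = 0`); hence `t x = 0`, and
condition (i) gives `x = 0`.
-/

section Monomial

variable {J : Type*}

theorem rnm_cons [Mul J] [Zero J] (a : J) {l : List J} (hl : l ≠ []) :
    rnm (a :: l) = a * rnm l := by
  cases l with
  | nil => exact absurd rfl hl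
  | cons b l => rfl

theorem rnm_replicate_append [Mul J] [Zero J] (y v : J) (k : ℕ) :
    rnm (List.replicate k y ++ [v]) = (y * ·)^[k] v := by
  induction k with
  | zero => rfl
  | succ k ih =>
    rw [List.replicate_succ, List.cons_append, rnm_cons _ (by simp), ih,
      Function.iterate_succ_apply']

theorem rnm_cons_replicate [Mul J] [Zero J] {y v : J} (hy : y * y = y) (hv : v * y = v)
    (k : ℕ) : rnm (v :: List.replicate k y) = v := by
  cases k with
  | zero => rfl
  | succ k =>
    rw [rnm_cons _ (by simp), List.replicate_succ', rnm_replicate_append,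
      Function.iterate_fixed hy, hv]

theorem rnm_set_zero [MulZeroClass J] {l : List J} {i : ℕ} (hi : i < l.length) :
    rnm (l.set i 0) = 0 := by
  induction l generalizing i with
  | nil => simp at hi
  | cons a l ih =>
    cases i with
    | zero => cases l <;> simp [rnm]
    | succ i =>
      have hi : i < l.length := by simpa using hi
      rw [List.set_cons_succ, rnm_cons _ (by rw [← List.length_pos_iff, List.length_set]; omega),
        ih hi, mul_zero]

end Monomial

section Peirce

variable {J : Type*} [NonUnitalNonAssocCommRing J]

theorem jordan_linearize (hJordan : ∀ x y : J, ((x * x) * y) * x = (x * x) * (y * x))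
    (h2 : ∀ x : J, x + x = 0 → x = 0) (x y z : J) :
    ((x * x) * y) * z + (((x * z) * y) * x + ((x * z) * y) * x)
      = (x * x) * (y * z) + ((x * z) * (y * x) + (x * z) * (y * x)) := by
  set f : J → J := fun w => ((w * w) * y) * w - (w * w) * (y * w)
  have hf : ∀ w, f w = 0 := fun w => sub_eq_zero.mpr (hJordan w y)
  refine sub_eq_zero.mp (h2 _ ?_)
  calc _ = f (x + z) - f (x - z) - (f z + f z) := by
        simp only [f, add_mul, mul_add, sub_mul, mul_sub, mul_comm z x]; abel
    _ = 0 := by simp only [hf, sub_zero, add_zero]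

theorem idempotent_peirce_cubic (hJordan : ∀ x y : J, ((x * x) * y) * x = (x * x) * (y * x))
    (h2 : ∀ x : J, x + x = 0 → x = 0) {e : J} (hid : e * e = e) (a : J) :
    e * a + (e * (e * (e * a)) + e * (e * (e * a)))
      = e * (e * a) + (e * (e * a) + e * (e * a)) := by
  have h := jordan_linearize hJordan h2 e e a
  simpa only [hid, mul_comm _ e] using h

theorem mul_mem_peirceHalf_of_mem_peirce1
    (hJordan : ∀ x y : J, ((x * x) * y) * x = (x * x) * (y * x))
    (h2 : ∀ x : J, x + x = 0 → x = 0) {e t x : J} (hid : e * e = e)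
    (ht : t ∈ peirceHalf e) (hx : x ∈ peirce1 e) : t * x ∈ peirceHalf e := by
  have h := jordan_linearize hJordan h2 e t x
  rw [hid, show e * x = x from hx, mul_comm (x * t) e, mul_comm t e, mul_comm x t,
    mul_comm x (e * t)] at h
  have hswap : e * (t * x) = (e * t) * x := by
    apply add_left_cancel (a := (e * t) * x + e * (t * x))
    rw [add_assoc, h]; abel
  show e * (t * x) + e * (t * x) = t * x
  rw [hswap, ← add_mul, show e * t + e * t = t from ht]

theorem eq_zero_of_mem_peirceHalf_of_eq_sub
    (hJordan : ∀ x y : J, ((x * x) * y) * x = (x * x) * (y * x))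
    (h2 : ∀ x : J, x + x = 0 → x = 0) {e v w : J} (hid : e * e = e)
    (hw : w ∈ peirceHalf e) (hv : w = v - (e * v + e * v)) : w = 0 := by
  have hw : e * w + e * w = w := hw
  have hcubic := idempotent_peirce_cubic hJordan h2 hid v
  have hfix : e * (e * w) = e * w := by
    have hcubic' : e * (e * (e * v)) + e * (e * (e * v))
        = (e * (e * v) + (e * (e * v) + e * (e * v))) - e * v := by
      rw [← hcubic]; abel
    rw [hv]
    simp only [mul_sub, mul_add, hcubic']
    abel
  have hzero : e * w = 0 := by
    have h := congrArg (e * ·) hw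
    simp only [mul_add, hfix] at h
    exact add_eq_right.mp h
  rw [← hw, hzero, add_zero]

end Peirce

section Derivation

variable {J : Type*} [NonUnitalNonAssocRing J] {n : ℕ} {D : J → J}

theorem IsNDer.map_rnm_eq_sum (hD : IsNDer n D) {l : List J} (hl : l.length = n)
    {S : Finset ℕ} (hS : S ⊆ Finset.range n)
    (hvanish : ∀ i < n, i ∉ S → D (l.getD i 0) = 0) :
    D (rnm l) = ∑ i ∈ S, rnm (l.set i (D (l.getD i 0))) := by
  rw [hD l hl]
  refine (Finset.sum_subset hS fun i hi hiS => ?_).symm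
  rw [hvanish i (Finset.mem_range.mp hi) hiS]
  exact rnm_set_zero (by rw [hl]; exact Finset.mem_range.mp hi)

theorem IsNDer.map_iterate_mul {k : ℕ} (hD : IsNDer (k + 1) D) {y : J} (hy : D y = 0)
    (v : J) : D ((y * ·)^[k] v) = (y * ·)^[k] (D v) := by
  have h := hD.map_rnm_eq_sum (l := List.replicate k y ++ [v]) (S := {k}) (by simp)
    (by simp) fun i hi hik => by
      rw [Finset.mem_singleton] at hik
      rw [List.getD_append _ _ _ _ (by simp; omega), List.getD_replicate _ (by omega), hy]
  simpa [rnm_replicate_append] using h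

theorem IsNDer.map_rnm_append_replicate (hD : IsNDer n D) {y : J} (hy : D y = 0)
    (l : List J) {k : ℕ} (hn : l.length + k = n) :
    D (rnm (l ++ List.replicate k y)) =
      ∑ i ∈ Finset.range l.length, rnm ((l ++ List.replicate k y).set i (D (l.getD i 0))) := by
  rw [hD.map_rnm_eq_sum (S := Finset.range l.length) (by simpa using hn)
    (Finset.range_subset_range.mpr (by omega)) fun i hi hil => by
      rw [Finset.mem_range, not_lt] at hil
      rw [List.getD_append_right _ _ _ _ hil, List.getD_replicate _ (by omega), hy]]
  refine Finset.sum_congr rfl fun i hi => ?_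
  rw [List.getD_append _ _ _ _ (Finset.mem_range.mp hi)]

end Derivation

section Iterate

variable {J : Type*} [NonUnitalNonAssocSemiring J]

theorem iterate_add_self_mul (y v : J) (k : ℕ) :
    ((y + y) * ·)^[k] v = 2 ^ k • (y * ·)^[k] v := by
  induction k with
  | zero => simp
  | succ k ih =>
    rw [Function.iterate_succ_apply', Function.iterate_succ_apply', ih, mul_smul_comm,
      add_mul, ← two_nsmul, smul_smul, ← pow_succ]

theorem iterate_mul_two_pow_smul {y a : J} (ha : y * a + y * a = a) (k : ℕ) :
    (y * ·)^[k] (2 ^ k • a) = a := by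
  induction k with
  | zero => simp
  | succ k ih =>
    rw [Function.iterate_succ_apply]
    convert ih using 2
    rw [mul_smul_comm, pow_succ, mul_smul, two_nsmul, ha]

end Iterate

section JordanDerivation

variable {J : Type*} [NonUnitalNonAssocCommRing J] {m : ℕ} {D : J → J} {e : J}

theorem IsNDer.map_add_self_mem_peirce1 (hD : IsNDer (m + 2) D) (hid : e * e = e)
    (hDe : D e = 0) : D (e + e) ∈ peirce1 e := by
  have h := hD.map_rnm_append_replicate hDe [e + e] (k := m + 1) (by simp; omega)
  rw [List.singleton_append, rnm_cons_replicate hid (by rw [add_mul, hid]),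
    List.length_singleton, Finset.sum_range_one, List.getD_cons_zero, List.set_cons_zero] at h
  have hrnm : rnm (D (e + e) :: List.replicate (m + 1) e) = D (e + e) * e := by
    rw [rnm_cons _ (by simp), List.replicate_succ, rnm_cons_replicate hid hid]
  show e * D (e + e) = D (e + e)
  rw [mul_comm, ← hrnm, ← h]

theorem IsNDer.map_eq_of_mem_peirceHalf (hD : IsNDer (m + 2) D) (hid : e * e = e)
    (hDe : D e = 0) {t : J} (ht : t ∈ peirceHalf e) :
    D t = (e * D t + e * D t) + t * D (e + e) := by
  have hee : (e + e) * e = e + e := by rw [add_mul, hid]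
  have hx : D (e + e) * e = D (e + e) := by
    rw [mul_comm]; exact hD.map_add_self_mem_peirce1 hid hDe
  have h := hD.map_rnm_append_replicate hDe [t, e + e] (k := m) (by simp; omega)
  rw [List.cons_append, rnm_cons _ (by simp), List.singleton_append,
    rnm_cons_replicate hid hee, show t * (e + e) = t by rw [mul_add, mul_comm, ht],
    List.length_cons, List.length_singleton, Finset.sum_range_succ, Finset.sum_range_one] at h
  simp only [List.getD_cons_zero, List.set_cons_zero, List.getD_cons_succ, List.set_cons_succ] at h
  rwa [rnm_cons _ (by simp), rnm_cons_replicate hid hee, rnm_cons _ (by simp),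
    rnm_cons_replicate hid hx, mul_add, mul_comm (D t)] at h

theorem IsNDer.map_add_self_eq_zero
    (hJordan : ∀ x y : J, ((x * x) * y) * x = (x * x) * (y * x))
    (h2 : ∀ x : J, x + x = 0 → x = 0) (hD : IsNDer (m + 2) D) (hid : e * e = e)
    (hDe : D e = 0) (hcond : ∀ a ∈ peirce1 e, (∀ t ∈ peirceHalf e, t * a = 0) → a = 0) :
    D (e + e) = 0 := by
  have hx := hD.map_add_self_mem_peirce1 hid hDe
  refine hcond _ hx fun t ht => eq_zero_of_mem_peirceHalf_of_eq_sub hJordan h2 hid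
    (mul_mem_peirceHalf_of_mem_peirce1 hJordan h2 hid ht hx) (v := D t) ?_
  exact eq_sub_of_add_eq' (hD.map_eq_of_mem_peirceHalf hid hDe ht).symm

end JordanDerivation

theorem nDer_two_smul_general {n : ℕ} (hn : 2 ≤ n) {J : Type*} [NonUnitalNonAssocCommRing J]
    (hJordan : ∀ x y : J, ((x * x) * y) * x = (x * x) * (y * x))
    (h2 : ∀ x : J, x + x = 0 → x = 0)
    (e : J) (hid : e * e = e)
    (hcond1 : ∀ a ∈ peirce1 e, (∀ t ∈ peirceHalf e, t * a = 0) → a = 0)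
    (D : J → J) (hder : IsNDer n D) (hDe : D e = 0) :
    D (e + e) = 0 ∧
    (∀ a ∈ peirceHalf e, D ((2 ^ (n - 1)) • a) = (2 ^ (n - 1)) • D a) ∧
    (∀ a ∈ peirce1 e, D ((2 ^ (n - 1)) • a) = (2 ^ (n - 1)) • D a) := by
  obtain ⟨m, rfl⟩ : ∃ m, n = m + 2 := ⟨n - 2, by omega⟩
  have h2e : D (e + e) = 0 := hder.map_add_self_eq_zero hJordan h2 hid hDe hcond1
  refine ⟨h2e, fun a (ha : e * a + e * a = a) => ?_, fun a (ha : e * a = a) => ?_⟩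
  · have hfix : ((e + e) * ·)^[m + 1] (2 ^ (m + 1) • a) = 2 ^ (m + 1) • a :=
      Function.iterate_fixed (by rw [mul_smul_comm, add_mul, ha]) _
    calc D (2 ^ (m + 1) • a) = ((e + e) * ·)^[m + 1] (D (2 ^ (m + 1) • a)) := by
          rw [← hder.map_iterate_mul h2e, hfix]
      _ = 2 ^ (m + 1) • (e * ·)^[m + 1] (D (2 ^ (m + 1) • a)) := iterate_add_self_mul _ _ _
      _ = 2 ^ (m + 1) • D a := by
          rw [← hder.map_iterate_mul hDe, iterate_mul_two_pow_smul ha]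
  · have hfix : (e * ·)^[m + 1] a = a := Function.iterate_fixed ha _
    calc D (2 ^ (m + 1) • a) = D (((e + e) * ·)^[m + 1] a) := by
          rw [iterate_add_self_mul, hfix]
      _ = ((e + e) * ·)^[m + 1] (D a) := hder.map_iterate_mul h2e a
      _ = 2 ^ (m + 1) • (e * ·)^[m + 1] (D a) := iterate_add_self_mul _ _ _
      _ = 2 ^ (m + 1) • D a := by rw [← hder.map_iterate_mul hDe, hfix]

theorem nDer_two_smul {n : ℕ} (hn : 2 ≤ n) {J : Type*} [NonUnitalNonAssocCommRing J]
    (hJordan : ∀ x y : J, ((x * x) * y) * x = (x * x) * (y * x))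
    (h2 : ∀ x : J, x + x = 0 → x = 0)
    (hn1 : ∀ x : J, (n - 1) • x = 0 → x = 0)
    (e : J) (hid : e * e = e) (hne : e ≠ 0) (hnu : ∃ x : J, e * x ≠ x)
    (hcond1 : ∀ a ∈ peirce1 e, (∀ t ∈ peirceHalf e, t * a = 0) → a = 0)
    (hcond1' : ∀ a ∈ peirce0 e, (∀ t ∈ peirceHalf e, t * a = 0) → a = 0)
    (D : J → J) (hder : IsNDer n D) (hDe : D e = 0) :
    D (e + e) = 0 ∧
    (∀ a ∈ peirceHalf e, D ((2 ^ (n - 1)) • a) = (2 ^ (n - 1)) • D a) ∧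
    (∀ a ∈ peirce1 e, D ((2 ^ (n - 1)) • a) = (2 ^ (n - 1)) • D a) :=
  nDer_two_smul_general hn hJordan h2 e hid hcond1 D hder hDe
end

section
/- Let J be a 2-torsion free and (n−1)-torsion free Jordan ring with nontrivial idempotent e satisfying conditions (i)–(iii), and D : J → J an n-multiplicative derivation with D(e) = 0. Then for all a₁ ∈ J₁, a_{1/2} ∈ J_{1/2}, a₀ ∈ J₀: D(a₁ + a_{1/2} + a₀) = D(a₁) + D(a_{1/2}) + D(a₀). -/
/-!
Write `Δ(x, y) = D (x + y) - D x - D y`. Since `D e = 0`, the `n`-derivation identity on the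
monomials `e(e(⋯(e(t x))))` shows that `D` commutes with `L_e` and satisfies the Leibniz rule up to
an error in `J₀`. For `z ∈ J₁` and `t ∈ J₀` we have `t z = D t z = 0`, so the identity on
`v₁(⋯(v_{n-2}(t (z + y))))` and on `v₁(⋯(v_{n-2}(t y)))` shows that every monomial of degree `n`
ending in `t Δ(z, y)` vanishes; conditions (ii) and (iii) then kill the `J₀`- and
`J_{1/2}`-components of `Δ(z, y)`, so `Δ(z, y) ∈ J₁`. For `z ∈ J₀` simply `Δ(z, y) ∈ J₀`. Hence
`D` is additive on `J₁ + J₀`.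

For `t, u ∈ J_{1/2}` the product `t u` lies in `J₁ + J₀`, where `D` is additive, and the Leibniz
rule modulo `J₀` shows that `t Δ(y, u)` has no `J_{1/2}`-component. If `y ∈ J₁` or `y ∈ J₀`, then
`t Δ(y, u) ∈ J_{1/2}`, so it vanishes, and condition (i) gives `Δ(y, u) = 0`. Finally
`Δ(a₁, a₂ + a₀) ∈ J₁` and `Δ(a₁ + a₂, a₀) ∈ J₀` are both `D(a₁ + a₂ + a₀) - D a₁ - D a₂ - D a₀`.
-/

section RightNormed
variable {J : Type*} [NonUnitalNonAssocRing J]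

theorem rnm_cons_of_ne_nil (a : J) {l : List J} (hl : l ≠ []) : rnm (a :: l) = a * rnm l := by
  obtain ⟨b, l, rfl⟩ := List.exists_cons_of_ne_nil hl
  rfl

theorem rnm_append_singleton (us : List J) (x : J) : rnm (us ++ [x]) = us.foldr (· * ·) x := by
  induction us with
  | nil => rfl
  | cons u us ih => rw [List.cons_append, rnm_cons_of_ne_nil _ (by simp), ih, List.foldr_cons]

theorem foldr_mul_add (us : List J) (x y : J) :
    us.foldr (· * ·) (x + y) = us.foldr (· * ·) x + us.foldr (· * ·) y := by
  induction us with
  | nil => rfl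
  | cons u us ih => simp only [List.foldr_cons, ih, mul_add]

theorem foldr_mul_sub (us : List J) (x y : J) :
    us.foldr (· * ·) (x - y) = us.foldr (· * ·) x - us.foldr (· * ·) y := by
  induction us with
  | nil => rfl
  | cons u us ih => simp only [List.foldr_cons, ih, mul_sub]

theorem foldr_mul_zero (us : List J) : us.foldr (· * ·) (0 : J) = 0 := by
  simpa using foldr_mul_sub us 0 0

theorem foldr_mul_eq_zero_of_zero_mem {us : List J} (h : (0 : J) ∈ us) (x : J) :
    us.foldr (· * ·) x = 0 := by
  induction us with
  | nil => simp at h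
  | cons u us ih =>
    obtain rfl | h := List.mem_cons.mp h
    · exact zero_mul _
    · rw [List.foldr_cons, ih h, mul_zero]

theorem foldr_replicate_mul_self {e : J} (hid : e * e = e) (k : ℕ) :
    (List.replicate k e).foldr (· * ·) e = e := by
  induction k with
  | zero => rfl
  | succ k ih => rw [List.replicate_succ, List.foldr_cons, ih, hid]

theorem eq_zero_of_forall_foldr_eq_zero {S : Set J} (hS : ∀ a ∈ S, ∀ b ∈ S, a * b ∈ S)
    (hann : ∀ a ∈ S, (∀ t ∈ S, t * a = 0) → a = 0) (k : ℕ) {v : J} (hv : v ∈ S)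
    (h : ∀ ss : List J, ss.length = k → (∀ s ∈ ss, s ∈ S) → ss.foldr (· * ·) v = 0) :
    v = 0 := by
  induction k generalizing v with
  | zero => exact h [] rfl (by simp)
  | succ k ih =>
    refine hann v hv fun t ht => ih (hS t ht v hv) fun ss hss hS' => ?_
    have h' := h (ss ++ [t]) (by simp [hss]) fun s hs => by
      rcases List.mem_append.mp hs with hs | hs
      · exact hS' s hs
      · rwa [List.mem_singleton.mp hs]
    simpa using h'

end RightNormed

def addDefect {J : Type*} [AddGroup J] (D : J → J) (x y : J) : J := D (x + y) - D x - D y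

theorem addDefect_eq_zero_iff {J : Type*} [AddCommGroup J] {D : J → J} {x y : J} :
    addDefect D x y = 0 ↔ D (x + y) = D x + D y := by
  rw [addDefect, sub_sub, sub_eq_zero]

theorem addDefect_comm {J : Type*} [AddCommGroup J] (D : J → J) (x y : J) :
    addDefect D x y = addDefect D y x := by
  rw [addDefect, addDefect, add_comm x y, sub_right_comm]

def leibnizDefect {J : Type*} [NonUnitalNonAssocRing J] (D : J → J) (x y : J) : J :=
  D (x * y) - (D x * y + x * D y)

section Peirce
variable {J : Type*} [NonUnitalNonAssocRing J] {e : J}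

theorem eq_zero_of_mem_peirceHalf_of_mul_mul_eq {x : J} (hx : x ∈ peirceHalf e)
    (h : e * (e * x) = e * x) : x = 0 := by
  have hx' : e * x + e * x = x := hx
  have hex : e * x = 0 := by
    have : e * (e * x + e * x) = e * x := by rw [hx']
    rwa [mul_add, h, add_eq_right] at this
  rw [← hx', hex, add_zero]

theorem exists_peirce1_add_peirce0_of_mul_mul_eq {x : J} (h : e * (e * x) = e * x) :
    ∃ x₁ ∈ peirce1 e, ∃ x₀ ∈ peirce0 e, x₁ + x₀ = x :=
  ⟨e * x, h, x - e * x, show e * (x - e * x) = 0 by rw [mul_sub, h, sub_self],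
    add_sub_cancel _ _⟩

theorem mul_mul_add_eq_of_mem_peirce1_of_mem_peirce0 {x₁ x₀ : J} (h₁ : x₁ ∈ peirce1 e)
    (h₀ : x₀ ∈ peirce0 e) : e * (e * (x₁ + x₀)) = e * (x₁ + x₀) := by
  have h₁' : e * x₁ = x₁ := h₁
  have h₀' : e * x₀ = 0 := h₀
  rw [mul_add, h₁', h₀', add_zero, h₁']

theorem eq_zero_of_mem_peirce1_of_mem_peirce0 {x : J} (h₁ : x ∈ peirce1 e)
    (h₀ : x ∈ peirce0 e) : x = 0 :=
  (h₁ : e * x = x).symm.trans h₀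

theorem add_mem_peirce0 {a b : J} (ha : a ∈ peirce0 e) (hb : b ∈ peirce0 e) :
    a + b ∈ peirce0 e :=
  show e * (a + b) = 0 by rw [mul_add, ha, hb, add_zero]

theorem sub_mem_peirce0 {a b : J} (ha : a ∈ peirce0 e) (hb : b ∈ peirce0 e) :
    a - b ∈ peirce0 e :=
  show e * (a - b) = 0 by rw [mul_sub, ha, hb, sub_zero]

theorem mul_mem_peirceHalf_of_mul_left_comm {a u : J} (ha : ∀ y, e * (a * y) = a * (e * y))
    (hu : u ∈ peirceHalf e) : a * u ∈ peirceHalf e := by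
  show e * (a * u) + e * (a * u) = a * u
  rw [ha, ← mul_add, hu]

end Peirce

section Jordan
variable {J : Type*} [NonUnitalNonAssocCommRing J] [IsCommJordan J]

attribute [local instance] LieRing.ofAssociativeRing in
theorem jordan_linearized (h2 : ∀ x : J, x + x = 0 → x = 0) (a b c y : J) :
    a * (b * c * y) - b * c * (a * y) + (b * (c * a * y) - c * a * (b * y))
      + (c * (a * b * y) - a * b * (c * y)) = 0 := by
  have h := congr($(two_nsmul_lie_lmul_lmul_add_add_eq_zero a b c) y)
  rw [two_nsmul] at h
  exact h2 _ h

variable {e : J} (h2 : ∀ x : J, x + x = 0 → x = 0) (hid : e * e = e)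
include h2 hid

theorem mul_left_comm_of_mem_peirce1 {a : J} (ha : a ∈ peirce1 e) (y : J) :
    e * (a * y) = a * (e * y) := by
  have h := jordan_linearized h2 e e a y
  rw [mul_comm a e, ha, hid] at h
  rw [← sub_eq_zero, ← h]
  abel

theorem mul_left_comm_of_mem_peirce0 {a : J} (ha : a ∈ peirce0 e) (y : J) :
    e * (a * y) = a * (e * y) := by
  have h := jordan_linearized h2 e e a y
  rw [mul_comm a e, ha, hid] at h
  rw [← sub_eq_zero, ← neg_eq_zero, ← h]
  simp only [zero_mul, mul_zero]
  abel

theorem peirce_polynomial (x : J) :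
    e * (e * (e * x)) + e * (e * (e * x)) + e * x = e * (e * x) + e * (e * x) + e * (e * x) := by
  have h := jordan_linearized h2 e e x e
  simp only [hid, mul_comm _ e] at h
  rw [← sub_eq_zero, ← h]
  abel

-- The components are Lagrange interpolation polynomials in `L_e` at its eigenvalues `1, 1/2, 0`.
theorem exists_peirce_decomposition (v : J) :
    ∃ v₁ ∈ peirce1 e, ∃ v₂ ∈ peirceHalf e, ∃ v₀ ∈ peirce0 e,
      v₁ + v₂ + v₀ = v := by
  have hP := peirce_polynomial h2 hid v
  refine ⟨2 • (e * (e * v)) - e * v, ?_, 4 • (e * v - e * (e * v)), ?_,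
    v - (2 • (e * (e * v)) - e * v) - 4 • (e * v - e * (e * v)), ?_, by abel⟩
  all_goals
    change _ = _
    simp only [mul_sub, mul_smul_comm]
  · linear_combination (norm := module) hP
  · linear_combination (norm := module) (-4 : ℤ) • hP
  · linear_combination (norm := module) hP

theorem mul_eq_zero_of_mem_peirce1_of_mem_peirce0 {a b : J} (ha : a ∈ peirce1 e)
    (hb : b ∈ peirce0 e) : a * b = 0 := by
  have hb' : e * b = 0 := hb
  calc a * b = b * (e * a) := by rw [ha, mul_comm]
    _ = e * (b * a) := (mul_left_comm_of_mem_peirce0 h2 hid hb a).symm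
    _ = a * (e * b) := by rw [mul_comm b a, mul_left_comm_of_mem_peirce1 h2 hid ha]
    _ = 0 := by rw [hb', mul_zero]

theorem mul_mem_peirce0 {a b : J} (ha : a ∈ peirce0 e) (hb : b ∈ peirce0 e) :
    a * b ∈ peirce0 e :=
  show e * (a * b) = 0 by rw [mul_left_comm_of_mem_peirce0 h2 hid ha, hb, mul_zero]

theorem mul_mul_eq_of_mem_peirceHalf {a b : J} (ha : a ∈ peirceHalf e) (hb : b ∈ peirceHalf e) :
    e * (e * (a * b)) = e * (a * b) := by
  have h := jordan_linearized h2 a b e e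
  simp only [hid, mul_comm _ e] at h
  have ha₀ : e * a + e * a = a := ha
  have hb₀ : e * b + e * b = b := hb
  have ha' : e * (e * a) + e * (e * a) = e * a := by rw [← mul_add, ha₀]
  have hb' : e * (e * b) + e * (e * b) = e * b := by rw [← mul_add, hb₀]
  -- `a = 2 e a` and `b = 2 e b`, so four copies of each cross term of `h` add up to `a b`.
  have E₁ : a * (e * (e * b)) + a * (e * (e * b)) + (a * (e * (e * b)) + a * (e * (e * b)))
      = a * b := by
    rw [← mul_add, hb', ← mul_add, hb₀]
  have E₂ : b * (e * (e * a)) + b * (e * (e * a)) + (b * (e * (e * a)) + b * (e * (e * a)))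
      = a * b := by
    rw [← mul_add, ha', ← mul_add, ha₀, mul_comm]
  have E₃ : e * a * (e * b) + e * a * (e * b) + (e * a * (e * b) + e * a * (e * b)) = a * b := by
    rw [← mul_add, hb₀, ← add_mul, ha₀]
  suffices h4 : 4 • (e * (e * (a * b)) - e * (a * b)) = 0 by
    simp only [show (4 : ℕ) = 2 + 2 from rfl, add_nsmul, two_nsmul] at h4
    exact sub_eq_zero.mp (h2 _ (h2 _ h4))
  rw [mul_comm (e * b) (e * a)] at h
  linear_combination (norm := module) (4 : ℤ) • h - E₁ - E₂ + (2 : ℤ) • E₃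

theorem mem_peirce0_of_foldr_replicate_eq_zero (k : ℕ) (x : J)
    (h : (List.replicate k e).foldr (· * ·) x = 0) : x ∈ peirce0 e := by
  induction k generalizing x with
  | zero => show e * x = 0; rw [show x = 0 from h, mul_zero]
  | succ k ih =>
    rw [List.replicate_succ', List.foldr_append] at h
    have hee : e * (e * x) = 0 := ih (e * x) h
    have hP := peirce_polynomial h2 hid x
    rw [hee, mul_zero] at hP
    show e * x = 0
    simpa using hP

end Jordan

namespace IsNDer

section
variable {J : Type*} [NonUnitalNonAssocRing J] {n : ℕ} {D : J → J}

theorem map_foldr (hder : IsNDer n D) {us : List J} (hus : us.length + 1 = n) (x : J) :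
    D (us.foldr (· * ·) x) = ∑ i ∈ Finset.range us.length,
      (us.set i (D (us.getD i 0))).foldr (· * ·) x + us.foldr (· * ·) (D x) := by
  have h := hder (us ++ [x]) (by simp [hus])
  rw [rnm_append_singleton, ← hus, Finset.sum_range_succ] at h
  rw [h]
  congr 1
  · refine Finset.sum_congr rfl fun i hi => ?_
    have hi : i < us.length := Finset.mem_range.mp hi
    rw [List.getD_append _ _ _ _ hi, List.set_append_left _ _ hi, rnm_append_singleton]
  · rw [List.getD_append_right _ _ _ _ le_rfl, List.set_append_right _ _ le_rfl]
    simp [rnm_append_singleton]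

theorem map_zero (hder : IsNDer n D) (hn : 2 ≤ n) : D 0 = 0 := by
  have h := hder.map_foldr (us := List.replicate (n - 1) 0) (by simp; omega) 0
  have hmem : (0 : J) ∈ List.replicate (n - 1) 0 := List.mem_replicate.mpr ⟨by omega, rfl⟩
  simpa only [foldr_mul_zero, Finset.sum_const_zero, zero_add,
    foldr_mul_eq_zero_of_zero_mem hmem] using h

theorem map_foldr_mul (hder : IsNDer n D) {vs : List J} (hvs : vs.length + 2 = n) (t x : J) :
    D (vs.foldr (· * ·) (t * x)) = ∑ i ∈ Finset.range vs.length,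
      (vs.set i (D (vs.getD i 0))).foldr (· * ·) (t * x)
      + vs.foldr (· * ·) (D t * x) + vs.foldr (· * ·) (t * D x) := by
  have h := hder.map_foldr (us := vs ++ [t]) (by simp; omega) x
  simp only [List.foldr_append, List.foldr_cons, List.foldr_nil, List.length_append,
    List.length_singleton, Finset.sum_range_succ] at h
  rw [h]
  congr 2
  · refine Finset.sum_congr rfl fun i hi => ?_
    have hi : i < vs.length := Finset.mem_range.mp hi
    rw [List.getD_append _ _ _ _ hi, List.set_append_left _ _ hi, List.foldr_append]
    rfl
  · rw [List.getD_append_right _ _ _ _ le_rfl, List.set_append_right _ _ le_rfl]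
    simp

theorem map_foldr_mul_of_map_eq_zero (hder : IsNDer n D) {vs : List J}
    (hvs : vs.length + 2 = n) (hvs₀ : ∀ v ∈ vs, D v = 0) (t x : J) :
    D (vs.foldr (· * ·) (t * x)) =
      vs.foldr (· * ·) (D t * x) + vs.foldr (· * ·) (t * D x) := by
  rw [hder.map_foldr_mul hvs, Finset.sum_eq_zero, zero_add]
  intro i hi
  have hi : i < vs.length := Finset.mem_range.mp hi
  rw [List.getD_eq_getElem _ _ hi, hvs₀ _ (List.getElem_mem hi)]
  exact foldr_mul_eq_zero_of_zero_mem (List.mem_set hi 0) _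

theorem foldr_mul_map_add_sub (hder : IsNDer n D) {vs : List J} (hvs : vs.length + 2 = n)
    {t z : J} (htz : t * z = 0) (hDtz : D t * z = 0) (y : J) :
    vs.foldr (· * ·) (t * (D (z + y) - D y)) = 0 := by
  have hz := hder.map_foldr_mul hvs t (z + y)
  rw [mul_add, htz, zero_add, hder.map_foldr_mul hvs t y, mul_add, hDtz, zero_add] at hz
  rw [mul_sub, foldr_mul_sub, add_left_cancel hz, sub_self]

theorem map_mul_of_idempotent (hder : IsNDer n D) (hn : 2 ≤ n) {e : J} (hid : e * e = e)
    (hDe : D e = 0) (x : J) : D (x * e) = D x * e := by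
  have h := hder.map_foldr (us := x :: List.replicate (n - 2) e) (by simp; omega) e
  rw [Finset.sum_eq_single_of_mem 0 (by simp)] at h
  · simpa [foldr_replicate_mul_self hid, hDe, foldr_mul_zero] using h
  · intro i hi hi0
    obtain ⟨j, rfl⟩ := Nat.exists_eq_succ_of_ne_zero hi0
    have hj : j < n - 2 := by simp at hi; omega
    rw [List.getD_cons_succ, List.getD_replicate _ hj, hDe]
    exact foldr_mul_eq_zero_of_zero_mem (List.mem_set (by simpa using hi) 0) _

end

section
variable {J : Type*} [NonUnitalNonAssocCommRing J] {n : ℕ} {D : J → J} {e : J}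

theorem map_mul_left (hder : IsNDer n D) (hn : 2 ≤ n) (hid : e * e = e) (hDe : D e = 0)
    (x : J) : D (e * x) = e * D x := by
  rw [mul_comm, hder.map_mul_of_idempotent hn hid hDe, mul_comm]

theorem map_foldr_replicate (hder : IsNDer n D) (hn : 2 ≤ n) (hid : e * e = e) (hDe : D e = 0)
    (k : ℕ) (x : J) :
    D ((List.replicate k e).foldr (· * ·) x) = (List.replicate k e).foldr (· * ·) (D x) := by
  induction k with
  | zero => rfl
  | succ k ih => simp only [List.replicate_succ, List.foldr_cons, hder.map_mul_left hn hid hDe, ih]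

theorem map_mem_peirce1 (hder : IsNDer n D) (hn : 2 ≤ n) (hid : e * e = e) (hDe : D e = 0)
    {z : J} (hz : z ∈ peirce1 e) : D z ∈ peirce1 e :=
  show e * D z = D z by rw [← hder.map_mul_left hn hid hDe, hz]

theorem map_mem_peirce0 (hder : IsNDer n D) (hn : 2 ≤ n) (hid : e * e = e) (hDe : D e = 0)
    {z : J} (hz : z ∈ peirce0 e) : D z ∈ peirce0 e :=
  show e * D z = 0 by rw [← hder.map_mul_left hn hid hDe, hz, hder.map_zero hn]

theorem addDefect_mem_peirce0 (hder : IsNDer n D) (hn : 2 ≤ n) (hid : e * e = e) (hDe : D e = 0)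
    {z : J} (hz : z ∈ peirce0 e) (y : J) : addDefect D z y ∈ peirce0 e := by
  have hz' : e * z = 0 := hz
  show e * (D (z + y) - D z - D y) = 0
  simp only [mul_sub, ← hder.map_mul_left hn hid hDe, mul_add, hz', zero_add, hder.map_zero hn,
    sub_zero, sub_self]

end

section
variable {J : Type*} [NonUnitalNonAssocCommRing J] [IsCommJordan J] {n : ℕ} {D : J → J} {e : J}
  (hder : IsNDer n D) (hn : 2 ≤ n) (h2 : ∀ x : J, x + x = 0 → x = 0) (hid : e * e = e)
  (hDe : D e = 0)
include hder hn h2 hid hDe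

theorem leibnizDefect_mem_peirce0 (t x : J) : leibnizDefect D t x ∈ peirce0 e := by
  apply mem_peirce0_of_foldr_replicate_eq_zero h2 hid (n - 2)
  have h := hder.map_foldr_mul_of_map_eq_zero (vs := List.replicate (n - 2) e) (by simp; omega)
    (fun v hv => by rw [List.eq_of_mem_replicate hv, hDe]) t x
  rw [hder.map_foldr_replicate hn hid hDe] at h
  rw [leibnizDefect, foldr_mul_sub, h, foldr_mul_add, sub_self]

theorem foldr_mul_addDefect_eq_zero {vs : List J} (hvs : vs.length + 2 = n) {t z : J}
    (ht : t ∈ peirce0 e) (hz : z ∈ peirce1 e) (y : J) :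
    vs.foldr (· * ·) (t * addDefect D z y) = 0 := by
  have hzt : t * z = 0 := by
    rw [mul_comm]
    exact mul_eq_zero_of_mem_peirce1_of_mem_peirce0 h2 hid hz ht
  have hzDt : D t * z = 0 := by
    rw [mul_comm]
    exact mul_eq_zero_of_mem_peirce1_of_mem_peirce0 h2 hid hz (hder.map_mem_peirce0 hn hid hDe ht)
  have hDzt : t * D z = 0 := by
    rw [mul_comm]
    exact mul_eq_zero_of_mem_peirce1_of_mem_peirce0 h2 hid (hder.map_mem_peirce1 hn hid hDe hz) ht
  rw [addDefect, sub_right_comm, mul_sub _ _ (D z), hDzt, sub_zero]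
  exact hder.foldr_mul_map_add_sub hvs hzt hzDt y

theorem mul_addDefect_mem_peirce0 {t z : J} (ht : t ∈ peirce0 e) (hz : z ∈ peirce1 e) (y : J) :
    t * addDefect D z y ∈ peirce0 e :=
  mem_peirce0_of_foldr_replicate_eq_zero h2 hid (n - 2) _
    (hder.foldr_mul_addDefect_eq_zero hn h2 hid hDe (by simp; omega) ht hz y)

theorem mul_addDefect_eq_zero
    (hcond2 : ∀ a ∈ peirce0 e, (∀ t ∈ peirce0 e, t * a = 0) → a = 0)
    {t z : J} (ht : t ∈ peirce0 e) (hz : z ∈ peirce1 e) (y : J) : t * addDefect D z y = 0 :=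
  eq_zero_of_forall_foldr_eq_zero (fun _ ha _ hb => mul_mem_peirce0 h2 hid ha hb) hcond2 (n - 2)
    (hder.mul_addDefect_mem_peirce0 hn h2 hid hDe ht hz y)
    fun _ hss _ => hder.foldr_mul_addDefect_eq_zero hn h2 hid hDe (by omega) ht hz y

variable (hcond2 : ∀ a ∈ peirce0 e, (∀ t ∈ peirce0 e, t * a = 0) → a = 0)
  (hcond3 : ∀ a ∈ peirceHalf e, (∀ t ∈ peirce0 e, t * a = 0) → a = 0)
include hcond2 hcond3

theorem addDefect_mem_peirce1 {z : J} (hz : z ∈ peirce1 e) (y : J) :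
    addDefect D z y ∈ peirce1 e := by
  obtain ⟨Δ₁, h₁, Δ₂, h₂, Δ₀, h₀, hΔ⟩ :=
    exists_peirce_decomposition h2 hid (addDefect D z y)
  have hmul : ∀ t ∈ peirce0 e, t * addDefect D z y = t * Δ₂ + t * Δ₀ := fun t ht => by
    rw [← hΔ, mul_add, mul_add, mul_comm t Δ₁,
      mul_eq_zero_of_mem_peirce1_of_mem_peirce0 h2 hid h₁ ht, zero_add]
  have hΔ₂ : Δ₂ = 0 := hcond3 Δ₂ h₂ fun t ht => by
    have h₀' : t * Δ₂ ∈ peirce0 e := by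
      rw [eq_sub_of_add_eq (hmul t ht).symm]
      exact sub_mem_peirce0 (hder.mul_addDefect_mem_peirce0 hn h2 hid hDe ht hz y)
        (mul_mem_peirce0 h2 hid ht h₀)
    refine eq_zero_of_mem_peirceHalf_of_mul_mul_eq
      (mul_mem_peirceHalf_of_mul_left_comm (mul_left_comm_of_mem_peirce0 h2 hid ht) h₂) ?_
    rw [h₀', mul_zero]
  have hΔ₀ : Δ₀ = 0 := hcond2 Δ₀ h₀ fun t ht => by
    have h := hmul t ht
    rwa [hder.mul_addDefect_eq_zero hn h2 hid hDe hcond2 ht hz y, hΔ₂, mul_zero, zero_add,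
      eq_comm] at h
  rw [← hΔ, hΔ₂, hΔ₀, add_zero, add_zero]
  exact h₁

theorem map_add_of_mem_peirce1_of_mem_peirce0 {a b : J} (ha : a ∈ peirce1 e)
    (hb : b ∈ peirce0 e) : D (a + b) = D a + D b := by
  rw [← addDefect_eq_zero_iff]
  refine eq_zero_of_mem_peirce1_of_mem_peirce0
    (hder.addDefect_mem_peirce1 hn h2 hid hDe hcond2 hcond3 ha b) ?_
  rw [addDefect_comm]
  exact hder.addDefect_mem_peirce0 hn hid hDe hb a

theorem mul_addDefect_eq_zero_of_mem_peirceHalf {t u : J} (ht : t ∈ peirceHalf e)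
    (hu : u ∈ peirceHalf e) (y : J)
    (h : t * addDefect D y u ∈ peirceHalf e) : t * addDefect D y u = 0 := by
  obtain ⟨B₁, hB₁, B₀, hB₀, hB⟩ :=
    exists_peirce1_add_peirce0_of_mul_mul_eq (mul_mul_eq_of_mem_peirceHalf h2 hid ht hu)
  have hDtu : D (t * u) = D B₁ + D B₀ := by
    rw [← hB]
    exact hder.map_add_of_mem_peirce1_of_mem_peirce0 hn h2 hid hDe hcond2 hcond3 hB₁ hB₀
  have key : t * addDefect D y u = addDefect D B₁ (t * y + B₀)
      + (addDefect D B₀ (t * y) + (leibnizDefect D t y + leibnizDefect D t u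
        - leibnizDefect D t (y + u))) := by
    have hsum : B₁ + (t * y + B₀) = t * (y + u) := by rw [mul_add, ← hB]; abel
    simp only [addDefect, leibnizDefect, hsum, hDtu, add_comm B₀ (t * y), mul_sub, mul_add]
    abel
  apply eq_zero_of_mem_peirceHalf_of_mul_mul_eq h
  rw [key]
  refine mul_mul_add_eq_of_mem_peirce1_of_mem_peirce0
    (hder.addDefect_mem_peirce1 hn h2 hid hDe hcond2 hcond3 hB₁ _)
    (add_mem_peirce0 (hder.addDefect_mem_peirce0 hn hid hDe hB₀ _)
      (sub_mem_peirce0 (add_mem_peirce0 ?_ ?_) ?_)) <;>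
    exact hder.leibnizDefect_mem_peirce0 hn h2 hid hDe _ _

theorem map_add_of_mem_peirce1_of_mem_peirceHalf
    (hcond1 : ∀ a ∈ peirce1 e, (∀ t ∈ peirceHalf e, t * a = 0) → a = 0)
    {a u : J} (ha : a ∈ peirce1 e) (hu : u ∈ peirceHalf e) : D (a + u) = D a + D u := by
  have hΘ := hder.addDefect_mem_peirce1 hn h2 hid hDe hcond2 hcond3 ha u
  rw [← addDefect_eq_zero_iff]
  refine hcond1 _ hΘ fun t ht =>
    hder.mul_addDefect_eq_zero_of_mem_peirceHalf hn h2 hid hDe hcond2 hcond3 ht hu a ?_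
  rw [mul_comm]
  exact mul_mem_peirceHalf_of_mul_left_comm (mul_left_comm_of_mem_peirce1 h2 hid hΘ) ht

theorem map_add_of_mem_peirceHalf_of_mem_peirce0
    (hcond1' : ∀ a ∈ peirce0 e, (∀ t ∈ peirceHalf e, t * a = 0) → a = 0)
    {u a : J} (hu : u ∈ peirceHalf e) (ha : a ∈ peirce0 e) : D (u + a) = D u + D a := by
  have hΨ := hder.addDefect_mem_peirce0 hn hid hDe ha u
  rw [← addDefect_eq_zero_iff, addDefect_comm]
  refine hcond1' _ hΨ fun t ht =>
    hder.mul_addDefect_eq_zero_of_mem_peirceHalf hn h2 hid hDe hcond2 hcond3 ht hu a ?_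
  rw [mul_comm]
  exact mul_mem_peirceHalf_of_mul_left_comm (mul_left_comm_of_mem_peirce0 h2 hid hΨ) ht

end

end IsNDer

theorem isCommJordan_of_jordan_identity {J : Type*} [NonUnitalNonAssocCommRing J]
    (h : ∀ x y : J, ((x * x) * y) * x = (x * x) * (y * x)) : IsCommJordan J where
  lmul_comm_rmul_rmul a b := by
    rw [mul_comm a b, mul_comm (b * a), ← h, mul_comm _ a, mul_comm (a * a) b]

theorem nDer_add_components_general {n : ℕ} (hn : 2 ≤ n) {J : Type*} [NonUnitalNonAssocCommRing J]
    (hJordan : ∀ x y : J, ((x * x) * y) * x = (x * x) * (y * x))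
    (h2 : ∀ x : J, x + x = 0 → x = 0)
    (e : J) (hid : e * e = e)
    (hcond1 : ∀ a ∈ peirce1 e, (∀ t ∈ peirceHalf e, t * a = 0) → a = 0)
    (hcond1' : ∀ a ∈ peirce0 e, (∀ t ∈ peirceHalf e, t * a = 0) → a = 0)
    (hcond2 : ∀ a ∈ peirce0 e, (∀ t ∈ peirce0 e, t * a = 0) → a = 0)
    (hcond3 : ∀ a ∈ peirceHalf e, (∀ t ∈ peirce0 e, t * a = 0) → a = 0)
    (D : J → J) (hder : IsNDer n D) (hDe : D e = 0) :
    ∀ a₁ ∈ peirce1 e, ∀ a₂ ∈ peirceHalf e, ∀ a₀ ∈ peirce0 e,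
      D (a₁ + a₂ + a₀) = D a₁ + D a₂ + D a₀ := by
  intro a₁ ha₁ a₂ ha₂ a₀ ha₀
  have := isCommJordan_of_jordan_identity hJordan
  have h₁ := hder.addDefect_mem_peirce1 hn h2 hid hDe hcond2 hcond3 ha₁ (a₂ + a₀)
  have h₀ := hder.addDefect_mem_peirce0 hn hid hDe ha₀ (a₁ + a₂)
  rw [addDefect, hder.map_add_of_mem_peirceHalf_of_mem_peirce0 hn h2 hid hDe hcond2 hcond3
    hcond1' ha₂ ha₀, ← add_assoc] at h₁
  rw [addDefect_comm, addDefect, hder.map_add_of_mem_peirce1_of_mem_peirceHalf hn h2 hid hDe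
    hcond2 hcond3 hcond1 ha₁ ha₂] at h₀
  have h := eq_zero_of_mem_peirce1_of_mem_peirce0 h₁ (by convert h₀ using 1; abel)
  rw [← sub_eq_zero, ← h]
  abel

theorem nDer_add_components {n : ℕ} (hn : 2 ≤ n) {J : Type*} [NonUnitalNonAssocCommRing J]
    (hJordan : ∀ x y : J, ((x * x) * y) * x = (x * x) * (y * x))
    (h2 : ∀ x : J, x + x = 0 → x = 0)
    (hn1 : ∀ x : J, (n - 1) • x = 0 → x = 0)
    (e : J) (hid : e * e = e) (hne : e ≠ 0) (hnu : ∃ x : J, e * x ≠ x)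
    (hcond1 : ∀ a ∈ peirce1 e, (∀ t ∈ peirceHalf e, t * a = 0) → a = 0)
    (hcond1' : ∀ a ∈ peirce0 e, (∀ t ∈ peirceHalf e, t * a = 0) → a = 0)
    (hcond2 : ∀ a ∈ peirce0 e, (∀ t ∈ peirce0 e, t * a = 0) → a = 0)
    (hcond3 : ∀ a ∈ peirceHalf e, (∀ t ∈ peirce0 e, t * a = 0) → a = 0)
    (D : J → J) (hder : IsNDer n D) (hDe : D e = 0) :
    ∀ a₁ ∈ peirce1 e, ∀ a₂ ∈ peirceHalf e, ∀ a₀ ∈ peirce0 e,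
      D (a₁ + a₂ + a₀) = D a₁ + D a₂ + D a₀ :=
  nDer_add_components_general hn hJordan h2 e hid hcond1 hcond1' hcond2 hcond3 D hder hDe
end
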